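/- arXiv:2501.03096 — 2 statements merged into one kernel-verified Lean document; each statement's English description precedes it below -/
import Mathlib

section
/- Let D be a symmetric n×n matrix with smallest eigenvalue λ_min < 0. A probability measure μ on the unit sphere minimizes E(μ) = ∬ exp(⟪x, D y⟫) dμ(x) dμ(y) if and only if μ = δ_z for some unit eigenvector z of D corresponding to λ_min. -/
open MeasureTheory RealInnerProductSpace

noncomputable def energy {n : ℕ} (D : Matrix (Fin n) (Fin n) ℝ)
    (μ : Measure (EuclideanSpace ℝ (Fin n))) : ℝ :=
  ∫ x, ∫ y, Real.exp ⟪x, Matrix.toEuclideanLin D y⟫ ∂μ ∂μ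

def IsEigenvalue {n : ℕ} (D : Matrix (Fin n) (Fin n) ℝ) (l : ℝ) : Prop :=
  ∃ v : EuclideanSpace ℝ (Fin n), v ≠ 0 ∧ Matrix.toEuclideanLin D v = l • v

/-!
Write `m` for the barycentre `∫ x ∂ν` of a probability measure `ν` on the unit sphere. Jensen's
inequality for `exp` on the product measure `ν ⊗ ν` gives `exp ⟪m, D m⟫ ≤ E(ν)`, since the
bilinear form `⟪x, D y⟫` integrates to `⟪m, D m⟫`. As `‖m‖ ≤ 1` and `λ_min < 0`, the Rayleigh
bound gives `λ_min ≤ λ_min ‖m‖² ≤ ⟪m, D m⟫`, so `E(ν) ≥ exp λ_min = E(δ_z)`. Conversely, for a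
minimizer all these inequalities are equalities: `‖m‖ = 1`, which by strict convexity of the
ball forces `ν = δ_m`, and `m` attains the minimum of the Rayleigh quotient, so it is an
eigenvector for `λ_min`.
-/

open Metric Set Module.End

theorem Continuous.integrable_of_ae_mem_isCompact {X F : Type*} [TopologicalSpace X]
    [MeasurableSpace X] [OpensMeasurableSpace X] [T2Space X] [NormedAddCommGroup F]
    {μ : Measure X} [IsFiniteMeasure μ] {f : X → F} {K : Set X} (hf : Continuous f)
    (hK : IsCompact K) (hμK : ∀ᵐ x ∂μ, x ∈ K) : Integrable f μ := by
  rw [← Measure.restrict_eq_self_of_ae_mem hμK]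
  exact hf.continuousOn.integrableOn_compact hK

section Barycentre

variable {E : Type*} [NormedAddCommGroup E] [MeasurableSpace E] [BorelSpace E]
  {ν : Measure E} [IsProbabilityMeasure ν]

theorem ae_mem_sphere_of_measure_sphere_eq_one (hν : ν (sphere 0 1) = 1) :
    ∀ᵐ x ∂ν, x ∈ sphere (0 : E) 1 :=
  (ae_iff_measure_eq isClosed_sphere.measurableSet.nullMeasurableSet).2
    (by rw [measure_univ]; exact hν)

variable [NormedSpace ℝ E]

theorem norm_integral_id_le_one (hν : ν (sphere 0 1) = 1) : ‖∫ x, x ∂ν‖ ≤ 1 := by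
  simpa using norm_integral_le_of_norm_le_const (μ := ν) (f := id) (C := 1)
    ((ae_mem_sphere_of_measure_sphere_eq_one hν).mono fun x hx =>
      (mem_sphere_zero_iff_norm.1 hx).le)

theorem eq_dirac_integral_of_norm_integral_eq_one [StrictConvexSpace ℝ E] [CompleteSpace E]
    (hν : ν (sphere 0 1) = 1) (h : ‖∫ x, x ∂ν‖ = 1) : ν = Measure.dirac (∫ x, x ∂ν) := by
  have hle : ∀ᵐ x ∂ν, ‖id x‖ ≤ 1 :=
    (ae_mem_sphere_of_measure_sphere_eq_one hν).mono fun x hx =>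
      (mem_sphere_zero_iff_norm.1 hx).le
  rcases ae_eq_const_or_norm_integral_lt_of_norm_le_const hle with hconst | hlt
  · rw [average_eq_integral] at hconst
    calc ν = ν.map id := Measure.map_id.symm
      _ = ν.map fun _ => ∫ x, x ∂ν := Measure.map_congr hconst
      _ = _ := by simp [Measure.map_const]
  · simp [h] at hlt

end Barycentre

section Jensen

variable {E F : Type*} [NormedAddCommGroup E] [InnerProductSpace ℝ E] [FiniteDimensional ℝ E]
  [MeasurableSpace E] [BorelSpace E] [NormedAddCommGroup F] [InnerProductSpace ℝ F]
  [FiniteDimensional ℝ F] [MeasurableSpace F] [BorelSpace F]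
  {μ : Measure F} {ν : Measure E} {K : Set F} {L : Set E}

theorem integral_integral_inner_apply_of_ae_mem_isCompact [IsFiniteMeasure μ]
    [IsFiniteMeasure ν] (T : E →L[ℝ] F) (hK : IsCompact K) (hL : IsCompact L) (hμK : ∀ᵐ x ∂μ, x ∈ K) (hνL : ∀ᵐ y ∂ν, y ∈ L) :
    ∫ x, ∫ y, ⟪x, T y⟫ ∂ν ∂μ = ⟪∫ x, x ∂μ, T (∫ y, y ∂ν)⟫ := by
  have hμ : Integrable (fun x => x) μ := continuous_id.integrable_of_ae_mem_isCompact hK hμK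
  have hν : Integrable (fun y => y) ν := continuous_id.integrable_of_ae_mem_isCompact hL hνL
  have hinner (x : F) : ∫ y, ⟪x, T y⟫ ∂ν = ⟪x, T (∫ y, y ∂ν)⟫ := by
    rw [integral_inner (T.integrable_comp hν), T.integral_comp_comm hν]
  simp_rw [hinner]
  simpa only [real_inner_comm] using integral_inner (𝕜 := ℝ) hμ (T (∫ y, y ∂ν))

theorem ConvexOn.map_inner_integral_le_integral_integral [IsProbabilityMeasure μ]
    [IsProbabilityMeasure ν] {g : ℝ → ℝ} (hg : ConvexOn ℝ univ g)
    (hgc : Continuous g) (T : E →L[ℝ] F) (hK : IsCompact K) (hL : IsCompact L)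
    (hμK : ∀ᵐ x ∂μ, x ∈ K) (hνL : ∀ᵐ y ∂ν, y ∈ L) :
    g ⟪∫ x, x ∂μ, T (∫ y, y ∂ν)⟫ ≤ ∫ x, ∫ y, g ⟪x, T y⟫ ∂ν ∂μ := by
  have hKL : ∀ᵐ p ∂μ.prod ν, p ∈ K ×ˢ L :=
    (Measure.ae_prod_mem_iff_ae_ae_mem
      (hK.isClosed.measurableSet.prod hL.isClosed.measurableSet)).2
      (hμK.mono fun x hx => hνL.mono fun y hy => ⟨hx, hy⟩)
  have hf : Continuous fun p : F × E => ⟪p.1, T p.2⟫ := by fun_prop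
  have hfi := hf.integrable_of_ae_mem_isCompact (hK.prod hL) hKL
  have hgfi : Integrable (fun p : F × E => g ⟪p.1, T p.2⟫) (μ.prod ν) :=
    (hgc.comp hf).integrable_of_ae_mem_isCompact (hK.prod hL) hKL
  rw [← integral_integral_inner_apply_of_ae_mem_isCompact T hK hL hμK hνL,
    ← integral_prod _ hfi, ← integral_prod _ hgfi]
  exact hg.map_integral_le hgc.continuousOn isClosed_univ (by simp) hfi hgfi

end Jensen

namespace LinearMap.IsSymmetric

variable {E : Type*} [NormedAddCommGroup E] [InnerProductSpace ℝ E] [FiniteDimensional ℝ E]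
  {T : E →ₗ[ℝ] E} {lam : ℝ}

theorem mul_norm_sq_le_inner_apply_self (hT : T.IsSymmetric)
    (hlam : ∀ l, HasEigenvalue T l → lam ≤ l) (v : E) : lam * ‖v‖ ^ 2 ≤ ⟪v, T v⟫ := by
  rcases eq_or_ne v 0 with rfl | hv
  · simp
  have : Nontrivial E := ⟨⟨v, 0, hv⟩⟩
  have hbdd : BddBelow (Set.range fun x : {x : E // x ≠ 0} => ⟪T x, x⟫ / ‖(x : E)‖ ^ 2) :=
    ⟨-‖T.toContinuousLinearMap‖, by
      rintro _ ⟨x, rfl⟩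
      exact (abs_le.mp (T.toContinuousLinearMap.rayleighQuotient_le_norm x)).1⟩
  have hle : lam ≤ ⟪T v, v⟫ / ‖v‖ ^ 2 :=
    (hlam _ hT.hasEigenvalue_iInf_of_finiteDimensional).trans (ciInf_le hbdd ⟨v, hv⟩)
  rwa [le_div_iff₀ (by positivity), real_inner_comm] at hle

theorem apply_eq_smul_of_inner_apply_self_eq (hT : T.IsSymmetric)
    (hlam : ∀ l, HasEigenvalue T l → lam ≤ l) {v : E} (hv : ⟪v, T v⟫ = lam * ‖v‖ ^ 2) :
    T v = lam • v := by
  rcases eq_or_ne v 0 with rfl | hv₀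
  · simp
  have hmin : IsMinOn T.toContinuousLinearMap.reApplyInnerSelf (sphere 0 ‖v‖) v := by
    intro x hx
    rw [mem_sphere_zero_iff_norm] at hx
    change ⟪T v, v⟫ ≤ ⟪T x, x⟫
    rw [real_inner_comm, hv, real_inner_comm, ← hx]
    exact hT.mul_norm_sq_le_inner_apply_self hlam x
  obtain ⟨c, hc⟩ : ∃ c : ℝ, T v = c • v :=
    ⟨_, mem_eigenspace_iff.mp (hT.toSelfAdjoint.prop.hasEigenvector_of_isMinOn hv₀ hmin).1⟩
  have hcl : c = lam := by
    rw [hc, real_inner_smul_right, real_inner_self_eq_norm_sq] at hv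
    exact mul_right_cancel₀ (by positivity) hv
  rw [hc, hcl]

end LinearMap.IsSymmetric

section Energy

variable {n : ℕ} {D : Matrix (Fin n) (Fin n) ℝ}

theorem isEigenvalue_of_hasEigenvalue {l : ℝ} (h : HasEigenvalue (Matrix.toEuclideanLin D) l) :
    IsEigenvalue D l :=
  let ⟨v, hv⟩ := h.exists_hasEigenvector
  ⟨v, hv.2, mem_eigenspace_iff.mp hv.1⟩

theorem IsEigenvalue.exists_norm_eq_one {l : ℝ} (h : IsEigenvalue D l) :
    ∃ z, ‖z‖ = 1 ∧ Matrix.toEuclideanLin D z = l • z := by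
  obtain ⟨v, hv, hDv⟩ := h
  refine ⟨‖v‖⁻¹ • v, norm_smul_inv_norm hv, ?_⟩
  rw [map_smul, hDv, smul_comm]

theorem energy_dirac_of_apply_eq_smul {l : ℝ} {z : EuclideanSpace ℝ (Fin n)} (hz : ‖z‖ = 1)
    (hDz : Matrix.toEuclideanLin D z = l • z) : energy D (Measure.dirac z) = Real.exp l := by
  simp [energy, hDz, real_inner_smul_right, hz]

theorem exp_inner_integral_le_energy {ν : Measure (EuclideanSpace ℝ (Fin n))}
    [IsProbabilityMeasure ν] (hν : ν (sphere 0 1) = 1) :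
    Real.exp ⟪∫ x, x ∂ν, Matrix.toEuclideanLin D (∫ x, x ∂ν)⟫ ≤ energy D ν :=
  convexOn_exp.map_inner_integral_le_integral_integral Real.continuous_exp
    (Matrix.toEuclideanLin D).toContinuousLinearMap (isCompact_sphere 0 1) (isCompact_sphere 0 1)
    (ae_mem_sphere_of_measure_sphere_eq_one hν) (ae_mem_sphere_of_measure_sphere_eq_one hν)

end Energy

theorem stmt5 {n : ℕ} (D : Matrix (Fin n) (Fin n) ℝ) (hD : D.IsSymm)
    (lamMin : ℝ) (hlam : IsEigenvalue D lamMin)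
    (hmin : ∀ l : ℝ, IsEigenvalue D l → lamMin ≤ l)
    (hneg : lamMin < 0)
    (μ : Measure (EuclideanSpace ℝ (Fin n))) [IsProbabilityMeasure μ]
    (hμ : μ (Metric.sphere (0 : EuclideanSpace ℝ (Fin n)) 1) = 1) :
    (∀ ν : Measure (EuclideanSpace ℝ (Fin n)), IsProbabilityMeasure ν →
      ν (Metric.sphere (0 : EuclideanSpace ℝ (Fin n)) 1) = 1 →
      energy D μ ≤ energy D ν) ↔
    (∃ z : EuclideanSpace ℝ (Fin n), ‖z‖ = 1 ∧
      Matrix.toEuclideanLin D z = lamMin • z ∧ μ = Measure.dirac z) := by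
  have hT := Matrix.isSymmetric_toEuclideanLin_iff.2 hD
  have hlow (l : ℝ) (hl : HasEigenvalue (Matrix.toEuclideanLin D) l) : lamMin ≤ l :=
    hmin l (isEigenvalue_of_hasEigenvalue hl)
  constructor
  · intro hopt
    obtain ⟨z, hz, hDz⟩ := hlam.exists_norm_eq_one
    set m := ∫ x, x ∂μ
    have hm_le : ⟪m, Matrix.toEuclideanLin D m⟫ ≤ lamMin := by
      rw [← Real.exp_le_exp, ← energy_dirac_of_apply_eq_smul hz hDz]
      exact (exp_inner_integral_le_energy hμ).trans <|
        hopt _ inferInstance (Measure.dirac_apply_of_mem (mem_sphere_zero_iff_norm.2 hz))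
    have hray := hT.mul_norm_sq_le_inner_apply_self hlow m
    have hm_sq : 1 ≤ ‖m‖ ^ 2 := by nlinarith
    have hm : ‖m‖ = 1 := le_antisymm (norm_integral_id_le_one hμ)
      ((one_le_pow_iff_of_nonneg (norm_nonneg m) two_ne_zero).1 hm_sq)
    have hDm := hT.apply_eq_smul_of_inner_apply_self_eq hlow (by rw [hm] at hray ⊢; linarith)
    exact ⟨m, hm, hDm, eq_dirac_integral_of_norm_integral_eq_one hμ hm⟩
  · rintro ⟨z, hz, hDz, rfl⟩ ν _ hν
    rw [energy_dirac_of_apply_eq_smul hz hDz]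
    refine le_trans ?_ (exp_inner_integral_le_energy hν)
    have hray := hT.mul_norm_sq_le_inner_apply_self hlow (∫ x, x ∂ν)
    have hm_sq : ‖∫ x, x ∂ν‖ ^ 2 ≤ 1 := pow_le_one₀ (norm_nonneg _) (norm_integral_id_le_one hν)
    gcongr
    nlinarith
end

section
/- Let D be a symmetric negative definite matrix with smallest eigenvalue λ_min < 0 and let z be a unit eigenvector for λ_min. Then the measure μ* = (1/2)(δ_z + δ_{−z}) maximizes the energy E(μ) = ∬ exp(⟪x, D y⟫) dμ(x) dμ(y) over probability measures on the unit sphere, and E(μ*) = cosh(λ_min). -/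
open MeasureTheory RealInnerProductSpace ENNReal

/-!
Factor `-D = Bᴴ B`, so that `⟪x, D y⟫ = -⟪B x, B y⟫` and, on the unit sphere,
`‖B x‖² = -⟪x, D x⟫ ≤ -λ_min`. Expanding the exponential, the energy of `μ` is
`∑ₘ (-1)ᵐ Tₘ / m!` with `Tₘ = ∬ ⟪B x, B y⟫ᵐ dμ dμ`. Since `⟪u, v⟫ᵐ` is a sum of products
`P(u) P(v)` of monomials, `Tₘ` is a sum of squares `(∫ P ∘ B dμ)²`, so `0 ≤ Tₘ ≤ (-λ_min)ᵐ`: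
the odd terms are `≤ 0` and the even ones `≤ (-λ_min)ᵐ / m!`, which sum to `cosh λ_min`,
the energy of `(δ_z + δ_{-z}) / 2`.
-/

open Matrix Finset
open scoped MatrixOrder Nat

lemma EuclideanSpace.inner_pow_eq_sum_prod_mul_prod {ι : Type*} [Fintype ι] (m : ℕ)
    (u v : EuclideanSpace ℝ ι) :
    ⟪u, v⟫ ^ m = ∑ a : Fin m → ι, (∏ j, u (a j)) * ∏ j, v (a j) := by
  simp only [PiLp.inner_apply, RCLike.inner_apply, conj_trivial, Fintype.sum_pow,
    ← prod_mul_distrib, mul_comm]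

lemma hasSum_integral_pow_div_factorial {β : Type*} [MeasurableSpace β] {π : Measure β}
    [IsFiniteMeasure π] {k : β → ℝ} {c : ℝ} (hk : AEStronglyMeasurable k π)
    (hbd : ∀ᵐ p ∂π, |k p| ≤ c) :
    HasSum (fun m : ℕ => ∫ p, k p ^ m / m ! ∂π) (∫ p, Real.exp (k p) ∂π) := by
  have hterm (m : ℕ) : ∀ᵐ p ∂π, ‖k p ^ m / (m ! : ℝ)‖ ≤ c ^ m / m ! := by
    filter_upwards [hbd] with p hp
    rw [norm_div, norm_pow, Real.norm_eq_abs, RCLike.norm_natCast]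
    gcongr
  have hint (m : ℕ) := Integrable.of_bound (by fun_prop) _ (hterm m)
  have hsum : Summable fun m : ℕ => ∫ p, ‖k p ^ m / (m ! : ℝ)‖ ∂π := by
    refine ((Real.summable_pow_div_factorial c).mul_left (π.real Set.univ)).of_nonneg_of_le
      (fun m => integral_nonneg fun _ => norm_nonneg _) fun m => ?_
    simpa using integral_mono_ae (hint m).norm (integrable_const _) (hterm m)
  simpa [Real.exp_eq_exp_ℝ, NormedSpace.exp_eq_tsum_div] using
    hasSum_integral_of_summable_integral_norm hint hsum

lemma Real.hasSum_cosh_even_part (c : ℝ) :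
    HasSum (fun m : ℕ => (c ^ m + (-c) ^ m) / 2 / m !) (Real.cosh c) := by
  have h (x : ℝ) : HasSum (fun m : ℕ => x ^ m / m !) (Real.exp x) := by
    simpa [Real.exp_eq_exp_ℝ] using NormedSpace.expSeries_div_hasSum_exp x
  rw [Real.cosh_eq]
  exact (((h c).add (h (-c))).div_const 2).congr_fun fun m => by ring

lemma neg_one_pow_mul_le_of_le_pow {t c : ℝ} {m : ℕ} (ht₀ : 0 ≤ t) (ht : t ≤ c ^ m) :
    (-1) ^ m * t ≤ (c ^ m + (-c) ^ m) / 2 := by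
  rcases m.even_or_odd with hm | hm
  · rw [hm.neg_one_pow, hm.neg_pow]; linarith
  · rw [hm.neg_one_pow, hm.neg_pow]; linarith

section Kernel

variable {α ι : Type*} [MeasurableSpace α] [Fintype ι] {μ : Measure α}
  {g : α → EuclideanSpace ℝ ι} {r : ℝ}

lemma integral_inner_pow_nonneg [IsFiniteMeasure μ] (hg : Measurable g)
    (hbd : ∀ᵐ x ∂μ, ‖g x‖ ≤ r) (m : ℕ) :
    0 ≤ ∫ p, ⟪g p.1, g p.2⟫ ^ m ∂μ.prod μ := by
  set P : (Fin m → ι) → α → ℝ := fun a x => ∏ j, g x (a j)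
  have hP (a : Fin m → ι) : Integrable (P a) μ := by
    refine .of_bound (by fun_prop) (r ^ m) ?_
    filter_upwards [hbd] with x hx
    calc ‖P a x‖ = ∏ j, ‖g x (a j)‖ := norm_prod _ _
      _ ≤ ∏ _j : Fin m, r :=
        prod_le_prod (fun _ _ => norm_nonneg _) fun j _ => (PiLp.norm_apply_le _ _).trans hx
      _ = r ^ m := by simp
  calc 0 ≤ ∑ a, (∫ x, P a x ∂μ) * ∫ x, P a x ∂μ := sum_nonneg fun a _ => mul_self_nonneg _
    _ = ∑ a, ∫ p, P a p.1 * P a p.2 ∂μ.prod μ := by simp only [integral_prod_mul]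
    _ = ∫ p, ⟪g p.1, g p.2⟫ ^ m ∂μ.prod μ := by
      rw [← integral_finsetSum _ fun a _ => (hP a).mul_prod (hP a)]
      simp only [EuclideanSpace.inner_pow_eq_sum_prod_mul_prod, P]

lemma ae_abs_inner_le_sq [SFinite μ] (hbd : ∀ᵐ x ∂μ, ‖g x‖ ≤ r) :
    ∀ᵐ p ∂μ.prod μ, |⟪g p.1, g p.2⟫| ≤ r ^ 2 := by
  filter_upwards [Measure.quasiMeasurePreserving_fst.ae hbd,
    Measure.quasiMeasurePreserving_snd.ae hbd] with p h₁ h₂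
  calc |⟪g p.1, g p.2⟫| ≤ ‖g p.1‖ * ‖g p.2‖ := abs_real_inner_le_norm _ _
    _ ≤ r * r := mul_le_mul h₁ h₂ (norm_nonneg _) ((norm_nonneg _).trans h₁)
    _ = r ^ 2 := (sq r).symm

theorem integral_integral_exp_neg_inner_le_cosh [IsProbabilityMeasure μ] (hg : Measurable g)
    (hbd : ∀ᵐ x ∂μ, ‖g x‖ ≤ r) :
    ∫ x, ∫ y, Real.exp (-⟪g x, g y⟫) ∂μ ∂μ ≤ Real.cosh (r ^ 2) := by
  have hk : AEStronglyMeasurable (fun p : α × α => -⟪g p.1, g p.2⟫) (μ.prod μ) := by fun_prop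
  have habs : ∀ᵐ p ∂μ.prod μ, |⟪g p.1, g p.2⟫| ≤ r ^ 2 := ae_abs_inner_le_sq hbd
  have hexp : Integrable (fun p : α × α => Real.exp (-⟪g p.1, g p.2⟫)) (μ.prod μ) := by
    refine .of_bound (by fun_prop) (Real.exp (r ^ 2)) ?_
    filter_upwards [habs] with p hp
    rw [Real.norm_of_nonneg (Real.exp_pos _).le]
    exact Real.exp_le_exp.2 ((neg_le_abs _).trans hp)
  rw [integral_integral hexp]
  refine hasSum_le (fun m => ?_)
    (hasSum_integral_pow_div_factorial hk (by simpa only [abs_neg] using habs))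
    (Real.hasSum_cosh_even_part (r ^ 2))
  have hT : ∫ p, ⟪g p.1, g p.2⟫ ^ m ∂μ.prod μ ≤ (r ^ 2) ^ m := by
    refine (le_abs_self _).trans ?_
    simpa using norm_integral_le_of_norm_le_const (f := fun p => ⟪g p.1, g p.2⟫ ^ m)
      (habs.mono fun p hp => by
        rw [norm_pow, Real.norm_eq_abs]
        exact pow_le_pow_left₀ (abs_nonneg _) hp m)
  calc ∫ p, (-⟪g p.1, g p.2⟫) ^ m / m ! ∂μ.prod μ
      = (-1) ^ m * (∫ p, ⟪g p.1, g p.2⟫ ^ m ∂μ.prod μ) / m ! := by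
        simp only [neg_pow ⟪_, _⟫ m, integral_div, integral_const_mul]
    _ ≤ ((r ^ 2) ^ m + (-r ^ 2) ^ m) / 2 / m ! := by
      gcongr
      exact neg_one_pow_mul_le_of_le_pow (integral_inner_pow_nonneg hg hbd m) hT

end Kernel

lemma integral_half_smul_dirac_add_dirac {α : Type*} [MeasurableSpace α]
    [MeasurableSingletonClass α] (f : α → ℝ) (a b : α) :
    ∫ x, f x ∂((2 : ℝ≥0∞)⁻¹ • (Measure.dirac a + Measure.dirac b)) = (f a + f b) / 2 := by
  rw [integral_smul_measure, integral_add_measure (integrable_dirac (by simp))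
    (integrable_dirac (by simp)), integral_dirac, integral_dirac]
  simp [div_eq_inv_mul]

lemma LinearMap.IsSymmetric.mul_norm_sq_le_inner_self {E : Type*} [NormedAddCommGroup E]
    [InnerProductSpace ℝ E] [FiniteDimensional ℝ E] {T : E →ₗ[ℝ] E} (hT : T.IsSymmetric)
    {l : ℝ} (hl : ∀ μ, Module.End.HasEigenvalue T μ → l ≤ μ) (x : E) :
    l * ‖x‖ ^ 2 ≤ ⟪x, T x⟫ := by
  have hdiag : ⟪x, T x⟫ = ∑ i, hT.eigenvalues rfl i * ⟪x, hT.eigenvectorBasis rfl i⟫ ^ 2 := by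
    rw [← (hT.eigenvectorBasis rfl).sum_inner_mul_inner]
    refine sum_congr rfl fun i _ => ?_
    rw [← hT, hT.apply_eigenvectorBasis, real_inner_smul_left, real_inner_comm x,
      RCLike.ofReal_real_eq_id, id_eq]
    ring
  rw [hdiag, ← (hT.eigenvectorBasis rfl).sum_sq_inner_left, mul_sum]
  exact sum_le_sum fun i _ =>
    mul_le_mul_of_nonneg_right (hl _ (hT.hasEigenvalue_eigenvalues rfl i)) (sq_nonneg _)

lemma Matrix.inner_toEuclideanLin_conjTranspose_mul_self {m n : Type*} [Fintype m] [Fintype n]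
    [DecidableEq m] [DecidableEq n] (B : Matrix m n ℝ) (x y : EuclideanSpace ℝ n) :
    ⟪x, toEuclideanLin (Bᴴ * B) y⟫ = ⟪toEuclideanLin B x, toEuclideanLin B y⟫ := by
  rw [toLpLin_mul_same, LinearMap.comp_apply, toEuclideanLin_conjTranspose_eq_adjoint,
    LinearMap.adjoint_inner_right]

lemma isEigenvalue_of_hasEigenvalue_s13 {n : ℕ} {D : Matrix (Fin n) (Fin n) ℝ} {l : ℝ}
    (h : Module.End.HasEigenvalue (toEuclideanLin D) l) : IsEigenvalue D l := by
  obtain ⟨v, hv⟩ := h.exists_hasEigenvector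
  exact ⟨v, hv.2, Module.End.mem_eigenspace_iff.1 hv.1⟩

lemma energy_half_smul_dirac_add_dirac_neg {n : ℕ} {D : Matrix (Fin n) (Fin n) ℝ} {l : ℝ}
    {z : EuclideanSpace ℝ (Fin n)} (hz : ‖z‖ = 1) (hzeig : toEuclideanLin D z = l • z) :
    energy D ((2 : ℝ≥0∞)⁻¹ • (Measure.dirac z + Measure.dirac (-z))) = Real.cosh l := by
  have hzz : ⟪z, z⟫ = 1 := by rw [real_inner_self_eq_norm_sq, hz, one_pow]
  simp only [energy, integral_half_smul_dirac_add_dirac, map_neg, hzeig, inner_neg_left,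
    inner_neg_right, real_inner_smul_right, hzz, Real.cosh_eq]
  ring_nf

theorem stmt13_general {n : ℕ} (D : Matrix (Fin n) (Fin n) ℝ) (hD : (-D).PosDef)
    (lamMin : ℝ)
    (hmin : ∀ l : ℝ, IsEigenvalue D l → lamMin ≤ l)
    (hneg : lamMin < 0)
    (z : EuclideanSpace ℝ (Fin n)) (hz : ‖z‖ = 1)
    (hzeig : Matrix.toEuclideanLin D z = lamMin • z) :
    (∀ μ : Measure (EuclideanSpace ℝ (Fin n)), IsProbabilityMeasure μ →
      μ (Metric.sphere (0 : EuclideanSpace ℝ (Fin n)) 1) = 1 →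
      energy D μ ≤ energy D ((2 : ℝ≥0∞)⁻¹ • (Measure.dirac z + Measure.dirac (-z)))) ∧
    energy D ((2 : ℝ≥0∞)⁻¹ • (Measure.dirac z + Measure.dirac (-z))) =
      Real.cosh lamMin := by
  have hcosh := energy_half_smul_dirac_add_dirac_neg hz hzeig
  refine ⟨fun μ _ hμ => hcosh ▸ ?_, hcosh⟩
  obtain ⟨B, hB⟩ := CStarAlgebra.nonneg_iff_eq_star_mul_self.mp hD.posSemidef.nonneg
  set S := toEuclideanLin B
  have hinner (x y) : ⟪x, toEuclideanLin D y⟫ = -⟪S x, S y⟫ := by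
    rw [← inner_toEuclideanLin_conjTranspose_mul_self, ← star_eq_conjTranspose, ← hB, map_neg,
      LinearMap.neg_apply, inner_neg_right, neg_neg]
  have hsymm : (toEuclideanLin D).IsSymmetric :=
    isSymmetric_toEuclideanLin_iff.2 (by simpa using hD.isHermitian.neg)
  have hbd : ∀ᵐ x ∂μ, ‖S x‖ ≤ √(-lamMin) := by
    filter_upwards [(ae_mem_iff_measure_eq Metric.isClosed_sphere.nullMeasurableSet).2
      (by rw [hμ, measure_univ])] with x hx
    have hq := hsymm.mul_norm_sq_le_inner_self
      (fun l hl => hmin l (isEigenvalue_of_hasEigenvalue_s13 hl)) x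
    rw [hinner, mem_sphere_zero_iff_norm.1 hx, real_inner_self_eq_norm_sq] at hq
    exact Real.le_sqrt_of_sq_le (by linarith)
  have henergy := integral_integral_exp_neg_inner_le_cosh
    S.continuous_of_finiteDimensional.measurable hbd
  rw [Real.sq_sqrt (neg_nonneg.2 hneg.le), Real.cosh_neg] at henergy
  simpa only [energy, hinner] using henergy

theorem stmt13 {n : ℕ} (D : Matrix (Fin n) (Fin n) ℝ) (hD : (-D).PosDef)
    (lamMin : ℝ) (hlam : IsEigenvalue D lamMin)
    (hmin : ∀ l : ℝ, IsEigenvalue D l → lamMin ≤ l)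
    (hneg : lamMin < 0)
    (z : EuclideanSpace ℝ (Fin n)) (hz : ‖z‖ = 1)
    (hzeig : Matrix.toEuclideanLin D z = lamMin • z) :
    (∀ μ : Measure (EuclideanSpace ℝ (Fin n)), IsProbabilityMeasure μ →
      μ (Metric.sphere (0 : EuclideanSpace ℝ (Fin n)) 1) = 1 →
      energy D μ ≤ energy D ((2 : ℝ≥0∞)⁻¹ • (Measure.dirac z + Measure.dirac (-z)))) ∧
    energy D ((2 : ℝ≥0∞)⁻¹ • (Measure.dirac z + Measure.dirac (-z))) =
      Real.cosh lamMin :=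
  stmt13_general D hD lamMin hmin hneg z hz hzeig
end
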